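/- Anytime concentration of empirical means over a time window (Lemma 2): Let T_1 ≤ T_2 ≤ T be positive reals and W_1, …, W_T be i.i.d. σ-sub-Gaussian random variables with E[W_1] = 0. Then for any δ > 0, P( ∃ integer s with T_1 ≤ s ≤ T_2 such that (1/s)·Σ_{i=1}^s W_i ≥ δ ) ≤ exp( −T_1·δ² / (2σ²) ). -/

import Mathlib

open MeasureTheory ProbabilityTheory Real

/-- A real random variable `X` is `σ`-sub-Gaussian under `P`:
`E[exp (λ X)] ≤ exp (λ² σ² / 2)` for all `λ ∈ ℝ` (with the implicit integrability). -/
def IsSubGaussian {Ω : Type*} [MeasurableSpace Ω] (P : Measure Ω) (σ : ℝ) (X : Ω → ℝ) : Prop :=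
  ∀ t : ℝ, Integrable (fun ω => Real.exp (t * X ω)) P ∧
    ∫ ω, Real.exp (t * X ω) ∂P ≤ Real.exp (t ^ 2 * σ ^ 2 / 2)

lemma tuple_indep {Ω : Type*} [MeasurableSpace Ω] {P : Measure Ω} {T : ℕ}
    {W : ℕ → Ω → ℝ} (hWmeas : ∀ i, Measurable (W i))
    (hWindep : iIndepFun (fun i : Fin T => W (i + 1)) P)
    {k : ℕ} (hk : k < T) (F : (Fin k → ℝ) → ℝ) (hF : Measurable F)
    (G : ℝ → ℝ) (hG : Measurable G) :
    IndepFun (fun ω => F (fun i : Fin k => W ((i : ℕ) + 1) ω))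
      (fun ω => G (W (k + 1) ω)) P := by
  classical
  set S : Finset (Fin T) := Finset.univ.filter (fun j : Fin T => (j : ℕ) < k) with hS
  have hdisj : Disjoint S ({(⟨k, hk⟩ : Fin T)} : Finset (Fin T)) := by
    simp [hS, Finset.disjoint_singleton_right]
  have h := hWindep.indepFun_finset S {(⟨k, hk⟩ : Fin T)} hdisj (fun i => hWmeas _)
  have hφ : Measurable (fun v : {x : Fin T // x ∈ S} → ℝ =>
      F (fun i : Fin k => v ⟨⟨(i : ℕ), i.2.trans hk⟩, by simp [hS]⟩)) :=
    hF.comp (measurable_pi_lambda _ fun i => measurable_pi_apply _)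
  have hψ : Measurable (fun v : {x : Fin T // x ∈ ({(⟨k, hk⟩ : Fin T)} : Finset (Fin T))} → ℝ =>
      G (v ⟨⟨k, hk⟩, Finset.mem_singleton_self _⟩)) := hG.comp (measurable_pi_apply _)
  exact h.comp hφ hψ

open Classical in
/-- The process `f` stopped at the first time in `[m, m+j]` where it reaches level `a`. -/
noncomputable def stopG {Ω : Type*} (f : ℕ → Ω → ℝ) (a : ℝ) (m : ℕ) : ℕ → Ω → ℝ
  | 0 => f m
  | (j+1) => fun ω =>
      if ∀ i ∈ Finset.Icc m (m+j), f i ω < a then f (m+j+1) ω else stopG f a m j ω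

lemma stopG_zero {Ω : Type*} (f : ℕ → Ω → ℝ) (a : ℝ) (m : ℕ) : stopG f a m 0 = f m := rfl

open Classical in
lemma stopG_succ {Ω : Type*} (f : ℕ → Ω → ℝ) (a : ℝ) (m : ℕ) (j : ℕ) (ω : Ω) :
    stopG f a m (j+1) ω =
      if ∀ i ∈ Finset.Icc m (m+j), f i ω < a then f (m+j+1) ω else stopG f a m j ω := by
  simp [stopG]

/-- `stopG` always equals `f i` for some `i ∈ [m, m+j]`. -/
lemma stopG_rep {Ω : Type*} (f : ℕ → Ω → ℝ) (a : ℝ) (m j : ℕ) (ω : Ω) :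
    ∃ i ∈ Finset.Icc m (m+j), stopG f a m j ω = f i ω := by
  induction j with
  | zero => exact ⟨m, by simp, rfl⟩
  | succ j ih =>
    rw [stopG_succ]
    by_cases h : ∀ i ∈ Finset.Icc m (m+j), f i ω < a
    · exact ⟨m+j+1, by simp [Finset.mem_Icc]; omega, by rw [if_pos h]⟩
    · obtain ⟨i, hi, hrep⟩ := ih
      refine ⟨i, ?_, by rw [if_neg h]; exact hrep⟩
      simp only [Finset.mem_Icc] at hi ⊢; omega

/-- If the level is reached somewhere in the window, the stopped value is at least the level. -/
lemma stopG_ge {Ω : Type*} (f : ℕ → Ω → ℝ) (a : ℝ) (m j : ℕ) (ω : Ω)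
    (h : ∃ i ∈ Finset.Icc m (m+j), a ≤ f i ω) : a ≤ stopG f a m j ω := by
  induction j with
  | zero =>
    obtain ⟨i, hi, hfi⟩ := h
    have : i = m := by simp only [Finset.mem_Icc] at hi; omega
    simpa [stopG_zero, ← this]
  | succ j ih =>
    rw [stopG_succ]
    by_cases hc : ∀ i ∈ Finset.Icc m (m+j), f i ω < a
    · simp only [if_pos hc]
      obtain ⟨i, hi, hfi⟩ := h
      have : i = m+j+1 := by
        by_contra hne
        have : i ∈ Finset.Icc m (m+j) := by
          simp only [Finset.mem_Icc] at hi ⊢; omega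
        exact absurd hfi (not_le.2 (hc i this))
      exact this ▸ hfi
    · simp only [if_neg hc]
      push_neg at hc
      obtain ⟨i, hi, hfi⟩ := hc
      exact ih ⟨i, hi, hfi⟩

/-- If the level has not been reached up to time `m+j`, the stopped process equals `f (m+j)`. -/
lemma stopG_eq_of_lt {Ω : Type*} (f : ℕ → Ω → ℝ) (a : ℝ) (m j : ℕ) (ω : Ω)
    (h : ∀ i ∈ Finset.Icc m (m+j), f i ω < a) : stopG f a m j ω = f (m+j) ω := by
  cases j with
  | zero => simp [stopG_zero]
  | succ j =>
    have hc : ∀ i ∈ Finset.Icc m (m+j), f i ω < a := by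
      intro i hi
      refine h i ?_
      simp only [Finset.mem_Icc] at hi ⊢; omega
    rw [stopG_succ, if_pos hc]
    norm_num [Nat.add_assoc]

lemma stopG_measurable {Ω : Type*} [MeasurableSpace Ω] {f : ℕ → Ω → ℝ} (a : ℝ) (m : ℕ)
    (hf : ∀ i, Measurable (f i)) (j : ℕ) : Measurable (stopG f a m j) := by
  induction j with
  | zero => exact hf m
  | succ j ih =>
    have : stopG f a m (j+1) = fun ω =>
        if ω ∈ {ω | ∀ i ∈ Finset.Icc m (m+j), f i ω < a} then f (m+j+1) ω
        else stopG f a m j ω := by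
      funext ω; rw [stopG_succ]; rfl
    rw [this]
    refine Measurable.ite ?_ (hf _) ih
    have : {ω | ∀ i ∈ Finset.Icc m (m+j), f i ω < a}
        = ⋂ i ∈ Finset.Icc m (m+j), {ω | f i ω < a} := by
      ext ω; simp
    rw [this]
    exact MeasurableSet.biInter (Set.to_countable _)
      (fun i _ => measurableSet_lt (hf i) measurable_const)

lemma sum_Icc_one_eq_range {M : Type*} [AddCommMonoid M] (g : ℕ → M) (k : ℕ) :
    ∑ i ∈ Finset.Icc 1 k, g i = ∑ i ∈ Finset.range k, g (i + 1) := by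
  induction k with
  | zero => simp
  | succ k ih => rw [Finset.sum_Icc_succ_top (by omega), ih, Finset.sum_range_succ]

/-- **Anytime concentration of empirical means over a time window (Lemma 2).** -/
theorem anytime_subgaussian_empirical_mean
    {Ω : Type*} [MeasurableSpace Ω] (P : Measure Ω) [IsProbabilityMeasure P]
    (T : ℕ) (hT : 0 < T) (σ : ℝ) (hσ : 0 < σ)
    (W : ℕ → Ω → ℝ) (hWmeas : ∀ i, Measurable (W i))
    (hWsub : ∀ i ∈ Finset.Icc 1 T, IsSubGaussian P σ (W i))
    (hWmean : ∀ i ∈ Finset.Icc 1 T, ∫ ω, W i ω ∂P = 0)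
    (hWiid : ∀ i ∈ Finset.Icc 1 T, Measure.map (W i) P = Measure.map (W 1) P)
    (hWindep : iIndepFun (fun i : Fin T => W (i + 1)) P)
    (T₁ T₂ : ℝ) (hT₁ : 0 < T₁) (h12 : T₁ ≤ T₂) (h2T : T₂ ≤ T)
    (δ : ℝ) (hδ : 0 < δ) :
    P {ω | ∃ s : ℕ, T₁ ≤ (s : ℝ) ∧ (s : ℝ) ≤ T₂ ∧
        δ ≤ (∑ i ∈ Finset.Icc 1 s, W i ω) / s}
      ≤ ENNReal.ofReal (Real.exp (-T₁ * δ ^ 2 / (2 * σ ^ 2))) := by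
  classical
  set c : ℝ := δ ^ 2 / (2 * σ ^ 2) with hc_def
  have hc : 0 < c := by positivity
  set lam : ℝ := δ / σ ^ 2 with hlam_def
  have hlam : 0 < lam := by positivity
  have hlam2 : lam ^ 2 * σ ^ 2 / 2 = c := by
    rw [hlam_def, hc_def]; field_simp
  have hlamδ : lam * δ = 2 * c := by
    rw [hlam_def, hc_def]; field_simp
  set Ssum : ℕ → Ω → ℝ := fun k ω => ∑ i ∈ Finset.Icc 1 k, W i ω with hSsum_def
  set f : ℕ → Ω → ℝ := fun k ω => Real.exp (lam * Ssum k ω - k * c) with hf_def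
  have hfpos : ∀ k ω, 0 < f k ω := fun k ω => Real.exp_pos _
  have hSmeas : ∀ k, Measurable (Ssum k) := fun k =>
    Finset.measurable_sum _ (fun i _ => hWmeas i)
  have hfmeas : ∀ k, Measurable (f k) := fun k =>
    (Real.measurable_exp.comp (((hSmeas k).const_mul lam).sub measurable_const))
  have hfmul : ∀ k ω, f (k+1) ω = f k ω * (Real.exp (lam * W (k+1) ω) * Real.exp (-c)) := by
    intro k ω
    rw [hf_def]
    simp only
    rw [hSsum_def]
    simp only
    rw [Finset.sum_Icc_succ_top (by omega : 1 ≤ k + 1)]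
    rw [← Real.exp_add, ← Real.exp_add]
    congr 1
    push_cast
    ring
  set a : ℝ := Real.exp (T₁ * c) with ha_def
  have ha : 0 < a := Real.exp_pos _
  set m : ℕ := ⌈T₁⌉₊ with hm_def
  set n : ℕ := ⌊T₂⌋₊ with hn_def
  have hm1 : 1 ≤ m := Nat.one_le_ceil_iff.2 hT₁
  have hmT : m ≤ T := Nat.ceil_le.2 (le_trans h12 h2T)
  have hnT : n ≤ T := by
    rw [hn_def]
    have := Nat.floor_mono h2T
    simpa using this
  -- sub-Gaussian facts at scale lam
  have hsub : ∀ k, k + 1 ≤ T →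
      Integrable (fun ω => Real.exp (lam * W (k+1) ω)) P ∧
      ∫ ω, Real.exp (lam * W (k+1) ω) ∂P ≤ Real.exp c := by
    intro k hk
    have hmem : k + 1 ∈ Finset.Icc 1 T := by simp [Finset.mem_Icc]; omega
    have h := hWsub (k+1) hmem lam
    exact ⟨h.1, by simpa [hlam2] using h.2⟩
  -- Representation of partial sums through tuples
  have hSsum_tuple : ∀ k ω, Ssum k ω = ∑ i : Fin k, W ((i : ℕ) + 1) ω := by
    intro k ω
    rw [hSsum_def]
    simp only
    rw [sum_Icc_one_eq_range, ← Fin.sum_univ_eq_sum_range]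
  -- mgf bound for partial sums
  have hmgf : ∀ k, k ≤ T → Integrable (fun ω => Real.exp (lam * Ssum k ω)) P ∧
      ∫ ω, Real.exp (lam * Ssum k ω) ∂P ≤ Real.exp (k * c) := by
    intro k
    induction k with
    | zero =>
      intro _
      have h0 : ∀ ω, Ssum 0 ω = 0 := by intro ω; rw [hSsum_def]; simp
      constructor
      · simpa [h0] using (integrable_const (1 : ℝ) : Integrable (fun _ : Ω => (1:ℝ)) P)
      · simp [h0]
    | succ k ih =>
      intro hk1
      have hkT : k < T := hk1
      obtain ⟨ihInt, ihLe⟩ := ih (le_of_lt hkT)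
      have hindep : IndepFun (fun ω => Real.exp (lam * Ssum k ω))
          (fun ω => Real.exp (lam * W (k+1) ω)) P := by
        have h := tuple_indep hWmeas hWindep hkT
          (fun v : Fin k → ℝ => Real.exp (lam * ∑ i, v i))
          (Real.measurable_exp.comp ((Finset.measurable_sum _
            (fun i _ => measurable_pi_apply i)).const_mul lam))
          (fun x => Real.exp (lam * x))
          (Real.measurable_exp.comp (measurable_id.const_mul lam))
        have heq : (fun ω => Real.exp (lam * ∑ i : Fin k, W ((i : ℕ) + 1) ω))
            = fun ω => Real.exp (lam * Ssum k ω) := by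
          funext ω; rw [hSsum_tuple]
        rwa [heq] at h
      obtain ⟨hWint, hWle⟩ := hsub k hk1
      have hprod_eq : (fun ω => Real.exp (lam * Ssum (k+1) ω))
          = (fun ω => Real.exp (lam * Ssum k ω)) * (fun ω => Real.exp (lam * W (k+1) ω)) := by
        funext ω
        simp only [Pi.mul_apply]
        rw [← Real.exp_add]
        congr 1
        rw [hSsum_def]
        simp only
        rw [Finset.sum_Icc_succ_top (by omega : 1 ≤ k + 1)]
        ring
      constructor
      · rw [hprod_eq]; exact hindep.integrable_mul ihInt hWint
      · have := hindep.integral_mul_eq_mul_integral ihInt.aestronglyMeasurable hWint.aestronglyMeasurable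
        rw [hprod_eq]
        rw [show (∫ ω, ((fun ω => Real.exp (lam * Ssum k ω)) *
            (fun ω => Real.exp (lam * W (k+1) ω))) ω ∂P)
          = integral P ((fun ω => Real.exp (lam * Ssum k ω)) *
            (fun ω => Real.exp (lam * W (k+1) ω))) from rfl, this]
        have h1 : (0:ℝ) ≤ ∫ ω, Real.exp (lam * Ssum k ω) ∂P :=
          integral_nonneg (fun ω => (Real.exp_pos _).le)
        have h2 : (0:ℝ) ≤ ∫ ω, Real.exp (lam * W (k+1) ω) ∂P :=
          integral_nonneg (fun ω => (Real.exp_pos _).le)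
        calc (∫ ω, Real.exp (lam * Ssum k ω) ∂P) * ∫ ω, Real.exp (lam * W (k+1) ω) ∂P
            ≤ Real.exp (k * c) * Real.exp c := by
              exact mul_le_mul ihLe hWle h2 (Real.exp_pos _).le
          _ = Real.exp ((k+1 : ℕ) * c) := by rw [← Real.exp_add]; congr 1; push_cast; ring
  -- integrability of f and the basic bound
  have hfint : ∀ k, k ≤ T → Integrable (f k) P := by
    intro k hk
    have : f k = fun ω => Real.exp (lam * Ssum k ω) * Real.exp (-(k * c)) := by
      funext ω; rw [hf_def]; simp only; rw [← Real.exp_add]; ring_nf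
    rw [this]
    exact (hmgf k hk).1.mul_const _
  have hfm_int : ∫ ω, f m ω ∂P ≤ 1 := by
    have : f m = fun ω => Real.exp (lam * Ssum m ω) * Real.exp (-(m * c)) := by
      funext ω; rw [hf_def]; simp only; rw [← Real.exp_add]; ring_nf
    rw [this, integral_mul_const]
    calc (∫ ω, Real.exp (lam * Ssum m ω) ∂P) * Real.exp (-(m * c))
        ≤ Real.exp (m * c) * Real.exp (-(m * c)) :=
          mul_le_mul_of_nonneg_right (hmgf m hmT).2 (Real.exp_pos _).le
      _ = 1 := by rw [← Real.exp_add]; simp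
  -- The stopped process has integral at most 1
  have hGkey : ∀ j, m + j ≤ T → Integrable (stopG f a m j) P ∧
      ∫ ω, stopG f a m j ω ∂P ≤ 1 := by
    intro j
    induction j with
    | zero =>
      intro _
      rw [stopG_zero]
      exact ⟨hfint m hmT, hfm_int⟩
    | succ j ih =>
      intro hj1
      have hmjT : m + j < T := by omega
      obtain ⟨ihInt, ihLe⟩ := ih (by omega)
      set X : Ω → ℝ := fun ω =>
        if ∀ i ∈ Finset.Icc m (m+j), f i ω < a then f (m+j) ω else 0 with hX_def
      set Y : Ω → ℝ := fun ω =>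
        Real.exp (lam * W (m+j+1) ω) * Real.exp (-c) - 1 with hY_def
      have hstep : ∀ ω, stopG f a m (j+1) ω = stopG f a m j ω + X ω * Y ω := by
        intro ω
        rw [stopG_succ]
        by_cases hcnd : ∀ i ∈ Finset.Icc m (m+j), f i ω < a
        · rw [if_pos hcnd, hX_def]
          simp only [if_pos hcnd]
          rw [stopG_eq_of_lt f a m j ω hcnd, hfmul (m+j) ω, hY_def]
          ring
        · rw [if_neg hcnd, hX_def]
          simp only [if_neg hcnd]
          ring
      have hcondmeas : MeasurableSet {ω | ∀ i ∈ Finset.Icc m (m+j), f i ω < a} := by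
        have : {ω | ∀ i ∈ Finset.Icc m (m+j), f i ω < a}
            = ⋂ i ∈ Finset.Icc m (m+j), {ω | f i ω < a} := by ext ω; simp
        rw [this]
        exact MeasurableSet.biInter (Set.to_countable _)
          (fun i _ => measurableSet_lt (hfmeas i) measurable_const)
      have hXmeas : Measurable X := Measurable.ite hcondmeas (hfmeas _) measurable_const
      have hXint : Integrable X P := by
        refine (hfint (m+j) (le_of_lt hmjT)).mono' hXmeas.aestronglyMeasurable
          (ae_of_all _ (fun ω => ?_))
        rw [hX_def]
        simp only [Real.norm_eq_abs]
        by_cases hcnd : ∀ i ∈ Finset.Icc m (m+j), f i ω < a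
        · rw [if_pos hcnd, abs_of_nonneg (hfpos _ _).le]
        · rw [if_neg hcnd]; simpa using (hfpos (m+j) ω).le
      have hYint : Integrable Y P :=
        (((hsub (m+j) (by omega)).1).mul_const _).sub (integrable_const 1)
      -- Independence of X and Y
      have hfilter_sum : ∀ i, i ≤ m + j → ∀ ω : Ω,
          (∑ l ∈ Finset.univ.filter (fun l : Fin (m+j) => (l : ℕ) < i), W ((l : ℕ) + 1) ω)
            = Ssum i ω := by
        intro i hi ω
        rw [Finset.sum_filter, Fin.sum_univ_eq_sum_range
          (fun l => if l < i then W (l + 1) ω else 0) (m+j), ← Finset.sum_filter]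
        have : (Finset.range (m+j)).filter (fun l => l < i) = Finset.range i := by
          ext l; simp only [Finset.mem_filter, Finset.mem_range]; omega
        rw [this, hSsum_def]
        simp only
        rw [sum_Icc_one_eq_range]
      have hindepXY : IndepFun X Y P := by
        set fv : ℕ → (Fin (m+j) → ℝ) → ℝ := fun i v =>
          Real.exp (lam * (∑ l ∈ Finset.univ.filter (fun l : Fin (m+j) => (l : ℕ) < i), v l)
            - i * c) with hfv_def
        have hfv_meas : ∀ i, Measurable (fv i) := fun i =>
          Real.measurable_exp.comp (((Finset.measurable_sum _
            (fun l _ => measurable_pi_apply l)).const_mul lam).sub measurable_const)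
        set F : (Fin (m+j) → ℝ) → ℝ := fun v =>
          if ∀ i ∈ Finset.Icc m (m+j), fv i v < a then fv (m+j) v else 0 with hF_def
        have hFmeas : Measurable F := by
          refine Measurable.ite ?_ (hfv_meas _) measurable_const
          have : {v : Fin (m+j) → ℝ | ∀ i ∈ Finset.Icc m (m+j), fv i v < a}
              = ⋂ i ∈ Finset.Icc m (m+j), {v | fv i v < a} := by ext v; simp
          rw [this]
          exact MeasurableSet.biInter (Set.to_countable _)
            (fun i _ => measurableSet_lt (hfv_meas i) measurable_const)
        have hGmeas : Measurable (fun x : ℝ => Real.exp (lam * x) * Real.exp (-c) - 1) :=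
          ((Real.measurable_exp.comp (measurable_id.const_mul lam)).mul_const _).sub
            measurable_const
        have htuple := tuple_indep hWmeas hWindep hmjT F hFmeas _ hGmeas
        have hfv_eq : ∀ i, i ≤ m + j → ∀ ω : Ω,
            fv i (fun l : Fin (m+j) => W ((l : ℕ) + 1) ω) = f i ω := by
          intro i hi ω
          rw [hfv_def]
          simp only
          rw [hfilter_sum i hi ω, hf_def]
        have hXeq : X = fun ω => F (fun l : Fin (m+j) => W ((l : ℕ) + 1) ω) := by
          funext ω
          rw [hX_def, hF_def]
          simp only
          refine if_congr ?_ ?_ rfl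
          · constructor
            · intro h i hi
              rw [hfv_eq i (Finset.mem_Icc.1 hi).2 ω]
              exact h i hi
            · intro h i hi
              have := h i hi
              rwa [hfv_eq i (Finset.mem_Icc.1 hi).2 ω] at this
          · rw [hfv_eq (m+j) le_rfl ω]
        rw [hXeq, hY_def]
        exact htuple
      have hXYint : Integrable (X * Y) P := hindepXY.integrable_mul hXint hYint
      have hintY : ∫ ω, Y ω ∂P ≤ 0 := by
        rw [hY_def]
        rw [integral_sub (((hsub (m+j) (by omega)).1).mul_const _) (integrable_const 1)]
        rw [integral_mul_const, integral_const]
        simp only [measure_univ, ENNReal.toReal_one, probReal_univ, smul_eq_mul, one_mul]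
        have h1 : (∫ ω, Real.exp (lam * W (m+j+1) ω) ∂P) * Real.exp (-c)
            ≤ Real.exp c * Real.exp (-c) :=
          mul_le_mul_of_nonneg_right (hsub (m+j) (by omega)).2 (Real.exp_pos _).le
        rw [← Real.exp_add] at h1
        simp at h1
        linarith
      have hintX : 0 ≤ ∫ ω, X ω ∂P := by
        refine integral_nonneg (fun ω => ?_)
        rw [hX_def]
        dsimp only
        split
        · exact (hfpos _ _).le
        · exact le_rfl
      have hintXY : ∫ ω, (X * Y) ω ∂P ≤ 0 := by
        rw [show (∫ ω, (X * Y) ω ∂P) = integral P (X * Y) from rfl,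
          hindepXY.integral_mul_eq_mul_integral hXint.aestronglyMeasurable hYint.aestronglyMeasurable]
        exact mul_nonpos_iff.2 (Or.inl ⟨hintX, hintY⟩)
      have hstopeq : stopG f a m (j+1) = stopG f a m j + X * Y := funext hstep
      constructor
      · rw [hstopeq]; exact ihInt.add hXYint
      · rw [hstopeq, integral_add' ihInt hXYint]
        have : ∫ ω, (X * Y) ω ∂P ≤ 0 := hintXY
        linarith
  -- Final assembly
  rcases le_or_gt m n with hmn | hnm
  · have hsub_event : {ω | ∃ s : ℕ, T₁ ≤ (s : ℝ) ∧ (s : ℝ) ≤ T₂ ∧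
        δ ≤ (∑ i ∈ Finset.Icc 1 s, W i ω) / s}
        ⊆ {ω | a ≤ stopG f a m (n - m) ω} := by
      rintro ω ⟨s, hs1, hs2, hs3⟩
      have hms : m ≤ s := Nat.ceil_le.2 hs1
      have hsn : s ≤ n := Nat.le_floor hs2
      have hs1' : 1 ≤ s := le_trans hm1 hms
      have hs0 : (0 : ℝ) < s := by exact_mod_cast hs1'
      have hδs : δ * s ≤ Ssum s ω := (le_div_iff₀ hs0).1 hs3
      refine stopG_ge f a m (n - m) ω ⟨s, ?_, ?_⟩
      · simp only [Finset.mem_Icc]; omega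
      · rw [ha_def, hf_def]
        simp only
        rw [Real.exp_le_exp]
        have h1 : lam * (δ * s) ≤ lam * Ssum s ω := mul_le_mul_of_nonneg_left hδs hlam.le
        have h2 : lam * (δ * s) = 2 * c * s := by rw [← mul_assoc, hlamδ]
        have h3 : T₁ * c ≤ s * c := mul_le_mul_of_nonneg_right hs1 hc.le
        nlinarith
    obtain ⟨hGint, hGle⟩ := hGkey (n - m) (by omega)
    have hGnonneg : 0 ≤ᵐ[P] stopG f a m (n - m) := by
      refine ae_of_all _ (fun ω => ?_)
      obtain ⟨i, _, hrep⟩ := stopG_rep f a m (n - m) ω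
      rw [Pi.zero_apply, hrep]
      exact (hfpos _ _).le
    have hmark := mul_meas_ge_le_integral_of_nonneg hGnonneg hGint a
    have hPle : (P {x | a ≤ stopG f a m (n - m) x}).toReal ≤ Real.exp (-(T₁ * c)) := by
      have h1 : a * (P {x | a ≤ stopG f a m (n - m) x}).toReal ≤ 1 := le_trans hmark hGle
      rw [Real.exp_neg, ← ha_def, inv_eq_one_div, le_div_iff₀ ha]
      nlinarith [ENNReal.toReal_nonneg (a := P {x | a ≤ stopG f a m (n - m) x})]
    calc P {ω | ∃ s : ℕ, T₁ ≤ (s : ℝ) ∧ (s : ℝ) ≤ T₂ ∧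
          δ ≤ (∑ i ∈ Finset.Icc 1 s, W i ω) / s}
        ≤ P {x | a ≤ stopG f a m (n - m) x} := measure_mono hsub_event
      _ = ENNReal.ofReal ((P {x | a ≤ stopG f a m (n - m) x}).toReal) :=
          (ENNReal.ofReal_toReal (measure_ne_top _ _)).symm
      _ ≤ ENNReal.ofReal (Real.exp (-(T₁ * c))) := ENNReal.ofReal_le_ofReal hPle
      _ = ENNReal.ofReal (Real.exp (-T₁ * δ ^ 2 / (2 * σ ^ 2))) := by
          congr 1
          rw [hc_def]
          ring_nf
  · have hE : {ω | ∃ s : ℕ, T₁ ≤ (s : ℝ) ∧ (s : ℝ) ≤ T₂ ∧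
        δ ≤ (∑ i ∈ Finset.Icc 1 s, W i ω) / s} = ∅ := by
      ext ω
      simp only [Set.mem_setOf_eq, Set.mem_empty_iff_false, iff_false, not_exists]
      rintro s ⟨hs1, hs2, _⟩
      have hms : m ≤ s := Nat.ceil_le.2 hs1
      have hsn : s ≤ n := Nat.le_floor hs2
      omega
    rw [hE]
    simp
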